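/- Let f¹, f² : ℝ² → ℝ be twice continuously differentiable functions satisfying the Cauchy–Riemann equations ∂f¹/∂x¹ = ∂f²/∂x² and ∂f¹/∂x² = −∂f²/∂x¹ (or the anti-holomorphic equations ∂f¹/∂x¹ = −∂f²/∂x² and ∂f¹/∂x² = ∂f²/∂x¹). Then the graph (x¹, x², f¹(x¹,x²), f²(x¹,x²)) in ℝ⁴ satisfies the minimal surface equations: g₂₂ f^k₁₁ + g₁₁ f^k₂₂ − 2 g₁₂ f^k₁₂ = 0 for k = 1, 2. (That is, graphs of holomorphic or anti-holomorphic maps ℂ → ℂ are minimal surfaces in ℝ⁴ = ℂ².) -/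

import Mathlib

noncomputable section

/-- Partial derivative in the first variable. -/
def pd1 (F : ℝ → ℝ → ℝ) (u v : ℝ) : ℝ := deriv (fun x => F x v) u

/-- Partial derivative in the second variable. -/
def pd2 (F : ℝ → ℝ → ℝ) (u v : ℝ) : ℝ := deriv (fun y => F u y) v

/-- The minimal surface equations for the graph `(u, v, F1(u,v), F2(u,v)) ⊂ ℝ⁴`. -/
def MinimalGraphEq (F1 F2 : ℝ → ℝ → ℝ) (u v : ℝ) : Prop :=
  ((1 + (pd2 F1 u v) ^ 2 + (pd2 F2 u v) ^ 2) * pd1 (pd1 F1) u v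
    + (1 + (pd1 F1 u v) ^ 2 + (pd1 F2 u v) ^ 2) * pd2 (pd2 F1) u v
    - 2 * (pd1 F1 u v * pd2 F1 u v + pd1 F2 u v * pd2 F2 u v) * pd1 (pd2 F1) u v = 0) ∧
  ((1 + (pd2 F1 u v) ^ 2 + (pd2 F2 u v) ^ 2) * pd1 (pd1 F2) u v
    + (1 + (pd1 F1 u v) ^ 2 + (pd1 F2 u v) ^ 2) * pd2 (pd2 F2) u v
    - 2 * (pd1 F1 u v * pd2 F1 u v + pd1 F2 u v * pd2 F2 u v) * pd1 (pd2 F2) u v = 0)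

private lemma line1 (v u : ℝ) : HasDerivAt (fun x : ℝ => (x, v)) ((1:ℝ), (0:ℝ)) u :=
  (hasDerivAt_id u).prodMk (hasDerivAt_const u v)

private lemma line2 (u v : ℝ) : HasDerivAt (fun y : ℝ => (u, y)) ((0:ℝ), (1:ℝ)) v :=
  (hasDerivAt_const v u).prodMk (hasDerivAt_id v)

lemma pd1_eq (F : ℝ → ℝ → ℝ)
    (h : Differentiable ℝ (fun p : ℝ × ℝ => F p.1 p.2)) (u v : ℝ) :
    pd1 F u v = fderiv ℝ (fun p : ℝ × ℝ => F p.1 p.2) (u, v) (1, 0) := by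
  have := ((h (u, v)).hasFDerivAt.comp_hasDerivAt u (line1 v u))
  simpa [pd1, Function.comp_def] using this.deriv

lemma pd2_eq (F : ℝ → ℝ → ℝ)
    (h : Differentiable ℝ (fun p : ℝ × ℝ => F p.1 p.2)) (u v : ℝ) :
    pd2 F u v = fderiv ℝ (fun p : ℝ × ℝ => F p.1 p.2) (u, v) (0, 1) := by
  have := ((h (u, v)).hasFDerivAt.comp_hasDerivAt v (line2 u v))
  simpa [pd2, Function.comp_def] using this.deriv

lemma hasDerivAt_fderiv1 {F : ℝ × ℝ → ℝ} (h : ContDiff ℝ 2 F) (a : ℝ × ℝ) (u v : ℝ) :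
    HasDerivAt (fun x => fderiv ℝ F (x, v) a)
      (fderiv ℝ (fderiv ℝ F) (u, v) (1, 0) a) u := by
  have hF' : Differentiable ℝ (fderiv ℝ F) :=
    (h.fderiv_right (m := 1) (by norm_num)).differentiable one_ne_zero
  have hc : HasDerivAt (fun x => fderiv ℝ F (x, v))
      (fderiv ℝ (fderiv ℝ F) (u, v) (1, 0)) u :=
    (hF' (u, v)).hasFDerivAt.comp_hasDerivAt u (line1 v u)
  simpa using hc.clm_apply (hasDerivAt_const u a)

lemma hasDerivAt_fderiv2 {F : ℝ × ℝ → ℝ} (h : ContDiff ℝ 2 F) (a : ℝ × ℝ) (u v : ℝ) :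
    HasDerivAt (fun y => fderiv ℝ F (u, y) a)
      (fderiv ℝ (fderiv ℝ F) (u, v) (0, 1) a) v := by
  have hF' : Differentiable ℝ (fderiv ℝ F) :=
    (h.fderiv_right (m := 1) (by norm_num)).differentiable one_ne_zero
  have hc : HasDerivAt (fun y => fderiv ℝ F (u, y))
      (fderiv ℝ (fderiv ℝ F) (u, v) (0, 1)) v :=
    (hF' (u, v)).hasFDerivAt.comp_hasDerivAt v (line2 u v)
  simpa using hc.clm_apply (hasDerivAt_const v a)

lemma pd1_pd1_eq (F : ℝ → ℝ → ℝ) (h : ContDiff ℝ 2 (fun p : ℝ × ℝ => F p.1 p.2)) (u v : ℝ) :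
    pd1 (pd1 F) u v = fderiv ℝ (fderiv ℝ (fun p : ℝ × ℝ => F p.1 p.2)) (u, v) (1, 0) (1, 0) := by
  have hd := h.differentiable (by norm_num)
  have : (fun x => pd1 F x v) = fun x => fderiv ℝ (fun p : ℝ × ℝ => F p.1 p.2) (x, v) (1, 0) := by
    funext x; exact pd1_eq F hd x v
  rw [pd1, this]
  exact (hasDerivAt_fderiv1 h (1, 0) u v).deriv

lemma pd2_pd2_eq (F : ℝ → ℝ → ℝ) (h : ContDiff ℝ 2 (fun p : ℝ × ℝ => F p.1 p.2)) (u v : ℝ) :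
    pd2 (pd2 F) u v = fderiv ℝ (fderiv ℝ (fun p : ℝ × ℝ => F p.1 p.2)) (u, v) (0, 1) (0, 1) := by
  have hd := h.differentiable (by norm_num)
  have : (fun y => pd2 F u y) = fun y => fderiv ℝ (fun p : ℝ × ℝ => F p.1 p.2) (u, y) (0, 1) := by
    funext y; exact pd2_eq F hd u y
  rw [pd2, this]
  exact (hasDerivAt_fderiv2 h (0, 1) u v).deriv

lemma pd1_pd2_eq (F : ℝ → ℝ → ℝ) (h : ContDiff ℝ 2 (fun p : ℝ × ℝ => F p.1 p.2)) (u v : ℝ) :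
    pd1 (pd2 F) u v = fderiv ℝ (fderiv ℝ (fun p : ℝ × ℝ => F p.1 p.2)) (u, v) (1, 0) (0, 1) := by
  have hd := h.differentiable (by norm_num)
  have : (fun x => pd2 F x v) = fun x => fderiv ℝ (fun p : ℝ × ℝ => F p.1 p.2) (x, v) (0, 1) := by
    funext x; exact pd2_eq F hd x v
  rw [pd1, this]
  exact (hasDerivAt_fderiv1 h (0, 1) u v).deriv

lemma pd2_pd1_eq (F : ℝ → ℝ → ℝ) (h : ContDiff ℝ 2 (fun p : ℝ × ℝ => F p.1 p.2)) (u v : ℝ) :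
    pd2 (pd1 F) u v = fderiv ℝ (fderiv ℝ (fun p : ℝ × ℝ => F p.1 p.2)) (u, v) (0, 1) (1, 0) := by
  have hd := h.differentiable (by norm_num)
  have : (fun y => pd1 F u y) = fun y => fderiv ℝ (fun p : ℝ × ℝ => F p.1 p.2) (u, y) (1, 0) := by
    funext y; exact pd1_eq F hd u y
  rw [pd2, this]
  exact (hasDerivAt_fderiv2 h (1, 0) u v).deriv

lemma symm_snd (F : ℝ → ℝ → ℝ) (h : ContDiff ℝ 2 (fun p : ℝ × ℝ => F p.1 p.2)) (u v : ℝ) :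
    pd1 (pd2 F) u v = pd2 (pd1 F) u v := by
  rw [pd1_pd2_eq F h, pd2_pd1_eq F h]
  exact (h.contDiffAt.isSymmSndFDerivAt (by norm_num)) _ _

lemma pd1_neg (G : ℝ → ℝ → ℝ) (u v : ℝ) :
    pd1 (fun a b => -(G a b)) u v = -(pd1 G u v) := by
  simp only [pd1]; exact deriv.neg

lemma pd2_neg (G : ℝ → ℝ → ℝ) (u v : ℝ) :
    pd2 (fun a b => -(G a b)) u v = -(pd2 G u v) := by
  simp only [pd2]; exact deriv.neg

/-- graphs of holomorphic or anti-holomorphic maps `ℂ → ℂ` are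
minimal surfaces in `ℝ⁴ = ℂ²`: if C² functions `f¹, f²` satisfy the
Cauchy–Riemann equations (or the anti-holomorphic ones), then the graph
`(x¹, x², f¹, f²)` satisfies the minimal surface equations. -/
theorem stmt17 (f1 f2 : ℝ → ℝ → ℝ)
    (hf1 : ContDiff ℝ 2 (fun p : ℝ × ℝ => f1 p.1 p.2))
    (hf2 : ContDiff ℝ 2 (fun p : ℝ × ℝ => f2 p.1 p.2))
    (hCR : (∀ x y : ℝ, pd1 f1 x y = pd2 f2 x y ∧ pd2 f1 x y = -(pd1 f2 x y)) ∨
           (∀ x y : ℝ, pd1 f1 x y = -(pd2 f2 x y) ∧ pd2 f1 x y = pd1 f2 x y))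
    (x y : ℝ) :
    MinimalGraphEq f1 f2 x y := by
  rcases hCR with h | h
  · -- holomorphic case: pd1 f1 = pd2 f2, pd2 f1 = -(pd1 f2)
    have e1 : pd1 f1 = pd2 f2 := by funext a b; exact (h a b).1
    have e2 : pd2 f1 = fun a b => -(pd1 f2 a b) := by funext a b; exact (h a b).2
    have e1' : pd2 f2 = pd1 f1 := e1.symm
    have e2' : pd1 f2 = fun a b => -(pd2 f1 a b) := by
      funext a b; have := (h a b).2; linarith
    have hL1 : pd1 (pd1 f1) x y + pd2 (pd2 f1) x y = 0 := by
      rw [e1, e2, pd2_neg, symm_snd f2 hf2]; ring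
    have hL2 : pd1 (pd1 f2) x y + pd2 (pd2 f2) x y = 0 := by
      rw [e2', e1', pd1_neg, symm_snd f1 hf1]; ring
    have hg : pd1 f1 x y * pd2 f1 x y + pd1 f2 x y * pd2 f2 x y = 0 := by
      have h1 := (h x y).1; have h2 := (h x y).2; rw [h1, h2]; ring
    have hgg : (pd2 f1 x y) ^ 2 + (pd2 f2 x y) ^ 2 = (pd1 f1 x y) ^ 2 + (pd1 f2 x y) ^ 2 := by
      have h1 := (h x y).1; have h2 := (h x y).2; rw [h1, h2]; ring
    constructor
    · linear_combination (1 + (pd1 f1 x y) ^ 2 + (pd1 f2 x y) ^ 2) * hL1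
        + pd1 (pd1 f1) x y * hgg - 2 * pd1 (pd2 f1) x y * hg
    · linear_combination (1 + (pd1 f1 x y) ^ 2 + (pd1 f2 x y) ^ 2) * hL2
        + pd1 (pd1 f2) x y * hgg - 2 * pd1 (pd2 f2) x y * hg
  · -- anti-holomorphic case: pd1 f1 = -(pd2 f2), pd2 f1 = pd1 f2
    have e1 : pd1 f1 = fun a b => -(pd2 f2 a b) := by funext a b; exact (h a b).1
    have e2 : pd2 f1 = pd1 f2 := by funext a b; exact (h a b).2
    have e1' : pd2 f2 = fun a b => -(pd1 f1 a b) := by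
      funext a b; have := (h a b).1; linarith
    have e2' : pd1 f2 = pd2 f1 := e2.symm
    have hL1 : pd1 (pd1 f1) x y + pd2 (pd2 f1) x y = 0 := by
      rw [e1, e2, pd1_neg, symm_snd f2 hf2]; ring
    have hL2 : pd1 (pd1 f2) x y + pd2 (pd2 f2) x y = 0 := by
      rw [e2', e1', pd2_neg, symm_snd f1 hf1]; ring
    have hg : pd1 f1 x y * pd2 f1 x y + pd1 f2 x y * pd2 f2 x y = 0 := by
      have h1 := (h x y).1; have h2 := (h x y).2; rw [h1, h2]; ring
    have hgg : (pd2 f1 x y) ^ 2 + (pd2 f2 x y) ^ 2 = (pd1 f1 x y) ^ 2 + (pd1 f2 x y) ^ 2 := by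
      have h1 := (h x y).1; have h2 := (h x y).2; rw [h1, h2]; ring
    constructor
    · linear_combination (1 + (pd1 f1 x y) ^ 2 + (pd1 f2 x y) ^ 2) * hL1
        + pd1 (pd1 f1) x y * hgg - 2 * pd1 (pd2 f1) x y * hg
    · linear_combination (1 + (pd1 f1 x y) ^ 2 + (pd1 f2 x y) ^ 2) * hL2
        + pd1 (pd1 f2) x y * hgg - 2 * pd1 (pd2 f2) x y * hg
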